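/- Let μ be a Borel probability measure on ℝ^n and Λ ⊆ ℝ^n such that E(Λ) = {e_λ : λ ∈ Λ} is orthonormal in L²(μ). Then E(Λ) is a maximal orthogonal family of exponentials if and only if 0 < h_Λ(t) ≤ 1 for all t ∈ ℝ^n, where h_Λ(t) = Σ_{λ∈Λ} |μ̂(t−λ)|². -/

import Mathlib

/-!
The exponentials `e_λ` are unit vectors of `L²(μ)` with `⟪e_λ, e_t⟫ = μ̂(t - λ)`, so `h_Λ(t)` is
the Bessel sum of `e_t` against the orthonormal family `E(Λ)`; hence `h_Λ ≤ 1` always holds. The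
remaining condition `0 < h_Λ(t)` says that some `μ̂(t - λ)` is nonzero, which is maximality for
`t ∉ Λ` and automatic for `t ∈ Λ` because `μ̂(0) = 1`.
-/

open MeasureTheory Complex ENNReal

/-- Fourier transform of a measure on `ℝⁿ`. -/
noncomputable def muHat {n : ℕ} (μ : Measure (Fin n → ℝ)) (t : Fin n → ℝ) : ℂ :=
  ∫ x, Complex.exp (2 * (Real.pi : ℂ) * Complex.I * ((∑ i, t i * x i : ℝ) : ℂ)) ∂μ

/-- `Λ` is a spectrum for `μ`: the exponentials `e_λ`, `λ ∈ Λ`, form an orthonormal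
basis of `L²(μ)`; equivalently `∑_{λ∈Λ} |μ̂(t-λ)|² = 1` for all `t`. -/
def IsSpectrum {n : ℕ} (μ : Measure (Fin n → ℝ)) (Λ : Set (Fin n → ℝ)) : Prop :=
  ∀ t : Fin n → ℝ, ∑' l : Λ, ((‖muHat μ (t - (l : Fin n → ℝ))‖₊ : ℝ≥0∞) ^ 2) = 1

theorem Orthonormal.tsum_enorm_inner_sq_le {𝕜 E ι : Type*} [RCLike 𝕜] [NormedAddCommGroup E]
    [InnerProductSpace 𝕜 E] {v : ι → E} (hv : Orthonormal 𝕜 v) (x : E) :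
    ∑' i, ‖inner 𝕜 (v i) x‖ₑ ^ 2 ≤ ‖x‖ₑ ^ 2 := by
  have h := ENNReal.ofReal_le_ofReal (hv.tsum_inner_products_le x)
  rw [ENNReal.ofReal_tsum_of_nonneg (fun _ => by positivity) (hv.inner_products_summable x)] at h
  simpa only [ENNReal.ofReal_pow (norm_nonneg _), ofReal_norm] using h

section FourierExp

variable {n : ℕ}

noncomputable def fourierExp (t x : Fin n → ℝ) : ℂ :=
  Complex.exp (2 * (Real.pi : ℂ) * Complex.I * ((∑ i, t i * x i : ℝ) : ℂ))

lemma norm_fourierExp (t x : Fin n → ℝ) : ‖fourierExp t x‖ = 1 := by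
  simp [fourierExp, Complex.norm_exp, Complex.mul_re, Complex.mul_im]

lemma continuous_fourierExp (t : Fin n → ℝ) : Continuous (fourierExp t) := by
  unfold fourierExp; fun_prop

lemma conj_fourierExp_mul (l t x : Fin n → ℝ) :
    starRingEnd ℂ (fourierExp l x) * fourierExp t x = fourierExp (t - l) x := by
  simp only [fourierExp, ← Complex.exp_conj, ← Complex.exp_add, map_mul, Complex.conj_I,
    Complex.conj_ofReal, map_ofNat]
  congr 1
  push_cast [Finset.sum_sub_distrib, sub_mul, Pi.sub_apply]
  ring

lemma memLp_fourierExp (μ : Measure (Fin n → ℝ)) [IsFiniteMeasure μ] (p : ℝ≥0∞)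
    (t : Fin n → ℝ) : MemLp (fourierExp t) p μ :=
  .of_bound (continuous_fourierExp t).aestronglyMeasurable 1
    (.of_forall fun x => (norm_fourierExp t x).le)

lemma muHat_eq_integral_fourierExp (μ : Measure (Fin n → ℝ)) (t : Fin n → ℝ) :
    muHat μ t = ∫ x, fourierExp t x ∂μ :=
  rfl

lemma muHat_zero (μ : Measure (Fin n → ℝ)) [IsProbabilityMeasure μ] : muHat μ 0 = 1 := by
  simp [muHat]

noncomputable def fourierExpL2 (μ : Measure (Fin n → ℝ)) [IsFiniteMeasure μ]
    (t : Fin n → ℝ) : Lp ℂ 2 μ :=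
  (memLp_fourierExp μ 2 t).toLp (fourierExp t)

lemma inner_fourierExpL2 (μ : Measure (Fin n → ℝ)) [IsFiniteMeasure μ] (l t : Fin n → ℝ) :
    inner ℂ (fourierExpL2 μ l) (fourierExpL2 μ t) = muHat μ (t - l) := by
  rw [L2.inner_def, muHat_eq_integral_fourierExp]
  refine integral_congr_ae ?_
  filter_upwards [(memLp_fourierExp μ 2 l).coeFn_toLp, (memLp_fourierExp μ 2 t).coeFn_toLp]
    with x hl ht
  rw [fourierExpL2, fourierExpL2, hl, ht, RCLike.inner_apply, mul_comm, conj_fourierExp_mul]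

lemma norm_fourierExpL2 (μ : Measure (Fin n → ℝ)) [IsProbabilityMeasure μ] (t : Fin n → ℝ) :
    ‖fourierExpL2 μ t‖ = 1 := by
  have h := inner_self_eq_norm_sq (𝕜 := ℂ) (fourierExpL2 μ t)
  rw [inner_fourierExpL2, sub_self, muHat_zero, RCLike.one_re] at h
  exact (pow_eq_one_iff_of_nonneg (norm_nonneg _) two_ne_zero).mp h.symm

lemma orthonormal_fourierExpL2 (μ : Measure (Fin n → ℝ)) [IsProbabilityMeasure μ]
    {Λ : Set (Fin n → ℝ)} (horth : ∀ l ∈ Λ, ∀ l' ∈ Λ, l ≠ l' → muHat μ (l - l') = 0) :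
    Orthonormal ℂ (fun l : Λ => fourierExpL2 μ l) := by
  refine ⟨fun l => norm_fourierExpL2 μ l, fun l l' hne => ?_⟩
  change inner ℂ (fourierExpL2 μ l) (fourierExpL2 μ l') = 0
  rw [inner_fourierExpL2]
  exact horth _ l'.2 _ l.2 (Subtype.coe_ne_coe.mpr hne.symm)

lemma tsum_enorm_muHat_sq_le_one (μ : Measure (Fin n → ℝ)) [IsProbabilityMeasure μ]
    {Λ : Set (Fin n → ℝ)} (horth : ∀ l ∈ Λ, ∀ l' ∈ Λ, l ≠ l' → muHat μ (l - l') = 0)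
    (t : Fin n → ℝ) : ∑' l : Λ, ‖muHat μ (t - l)‖ₑ ^ 2 ≤ 1 := by
  have h := (orthonormal_fourierExpL2 μ horth).tsum_enorm_inner_sq_le (fourierExpL2 μ t)
  simp_rw [inner_fourierExpL2] at h
  rwa [← ofReal_norm, norm_fourierExpL2, ENNReal.ofReal_one, one_pow] at h

lemma tsum_enorm_muHat_sq_pos_iff (μ : Measure (Fin n → ℝ)) (Λ : Set (Fin n → ℝ))
    (t : Fin n → ℝ) : 0 < ∑' l : Λ, ‖muHat μ (t - l)‖ₑ ^ 2 ↔ ∃ l ∈ Λ, muHat μ (t - l) ≠ 0 := by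
  simp [pos_iff_ne_zero, ENNReal.summable.tsum_ne_zero_iff]

end FourierExp

theorem stmt3 {n : ℕ} (μ : Measure (Fin n → ℝ)) [IsProbabilityMeasure μ]
    (Λ : Set (Fin n → ℝ))
    (horth : ∀ l ∈ Λ, ∀ l' ∈ Λ, l ≠ l' → muHat μ (l - l') = 0) :
    (∀ t ∉ Λ, ∃ l ∈ Λ, muHat μ (t - l) ≠ 0) ↔
      (∀ t : Fin n → ℝ,
        0 < ∑' l : Λ, ((‖muHat μ (t - (l : Fin n → ℝ))‖₊ : ℝ≥0∞) ^ 2) ∧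
        ∑' l : Λ, ((‖muHat μ (t - (l : Fin n → ℝ))‖₊ : ℝ≥0∞) ^ 2) ≤ 1) := by
  simp only [← enorm_eq_nnnorm, tsum_enorm_muHat_sq_le_one μ horth, and_true,
    tsum_enorm_muHat_sq_pos_iff]
  refine ⟨fun hmax t => ?_, fun h t _ => h t⟩
  by_cases ht : t ∈ Λ
  · exact ⟨t, ht, by simp [muHat_zero]⟩
  · exact hmax t ht
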